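/- Let U be a unitary operator on a Hilbert space H with complementary orthogonal projections P⁺, P⁻ such that the off-diagonal blocks are Hilbert-Schmidt, and suppose U₋₋ := P⁻UP⁻ restricted to ran P⁻ → ran P⁻ is invertible. Then R := (U₋₋)⁻¹ satisfies R*R ∈ id + I₁(ran P⁻), i.e., R*R has a well-defined Fredholm determinant. -/

import Mathlib

noncomputable section

variable {H H' G : Type*}
  [NormedAddCommGroup H] [InnerProductSpace ℂ H] [CompleteSpace H]
  [NormedAddCommGroup H'] [InnerProductSpace ℂ H'] [CompleteSpace H']

open ContinuousLinearMap

/-- A bounded operator is Hilbert–Schmidt if `∑ ‖T eᵢ‖²` is finite for a Hilbert basis. -/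
def IsHilbertSchmidt {H G : Type*} [NormedAddCommGroup H] [InnerProductSpace ℂ H] [CompleteSpace H]
    [NormedAddCommGroup G] [InnerProductSpace ℂ G] (T : H →L[ℂ] G) : Prop :=
  ∃ (w : Set H) (b : HilbertBasis w ℂ H), Summable fun i => ‖T (b i)‖ ^ 2

/-- The Hilbert–Schmidt norm, computed with respect to a chosen Hilbert basis. -/
noncomputable def hsNorm {H G : Type*} [NormedAddCommGroup H] [InnerProductSpace ℂ H] [CompleteSpace H]
    [NormedAddCommGroup G] [InnerProductSpace ℂ G] (T : H →L[ℂ] G) : ℝ :=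
  Real.sqrt (∑' i, ‖T ((exists_hilbertBasis ℂ H).choose_spec.choose i)‖ ^ 2)

/-- The absolute value `|T| = √(T*T)` of a bounded operator, via the CFC. -/
noncomputable def opAbs (T : H →L[ℂ] H) : H →L[ℂ] H :=
  CFC.sqrt (ContinuousLinearMap.adjoint T ∘L T)

/-- Trace class: `∑ ⟪eᵢ, |T| eᵢ⟫` is finite for a Hilbert basis. -/
def IsTraceClass (T : H →L[ℂ] H) : Prop :=
  ∃ (w : Set H) (b : HilbertBasis w ℂ H),
    Summable fun i => RCLike.re (inner (𝕜 := ℂ) (b i) (opAbs T (b i)))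

/-- The trace norm `∑ ⟪eᵢ, |T| eᵢ⟫` computed with respect to a chosen Hilbert basis. -/
noncomputable def traceNorm (T : H →L[ℂ] H) : ℝ :=
  ∑' i, RCLike.re (inner (𝕜 := ℂ)
    ((exists_hilbertBasis ℂ H).choose_spec.choose i)
    (opAbs T ((exists_hilbertBasis ℂ H).choose_spec.choose i)))

/-- Fredholm determinant `det(1 + T)`, defined as the limit of finite-section determinants
along the net of finite subsets of a chosen Hilbert basis. -/
noncomputable def fredholmDet (T : H →L[ℂ] H) : ℂ :=
  letI := Classical.decEq (exists_hilbertBasis ℂ H).choose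
  Filter.limUnder Filter.atTop fun s : Finset (exists_hilbertBasis ℂ H).choose =>
    Matrix.det ((1 : Matrix s s ℂ) + Matrix.of fun i j =>
      inner (𝕜 := ℂ) ((exists_hilbertBasis ℂ H).choose_spec.choose i.1)
        (T ((exists_hilbertBasis ℂ H).choose_spec.choose j.1)))

end


/-!
With `S := P⁺ U P⁻ R`, the relations `P⁻ U P⁻ R = P⁻`, `P⁻ R = R` and `U*U = 1` give
`S = U R - P⁻` and hence `S*S = R*R - P⁻`. Since `P⁺ U P⁻` is Hilbert–Schmidt, so is `S`,
and `S*S` is then trace class: it is positive, so `|S*S| = S*S`, and `⟪eᵢ, S*S eᵢ⟫ = ‖S eᵢ‖²`.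
-/

open ContinuousLinearMap
open scoped InnerProductSpace

theorem star_mul_self_offDiag_mul_eq_star_mul_self_sub {A : Type*} [Ring A] [StarRing A]
    {u p q r : A} (hu : star u * u = 1) (hp : IsSelfAdjoint p) (hpp : IsIdempotentElem p)
    (hpq : q + p = 1) (hr : p * r = r) (hinv : p * u * p * r = p) :
    star (q * u * p * r) * (q * u * p * r) = star r * r - p := by
  have hpur : p * u * r = p := by rwa [mul_assoc _ p r, hr] at hinv
  have hrup : star r * star u * p = p := by
    simpa only [star_mul, hp.star_eq, mul_assoc] using congrArg star hpur
  have hoff : q * u * p * r = u * r - p := by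
    rw [eq_sub_of_add_eq hpq, mul_assoc _ p r, hr, sub_mul, sub_mul, one_mul, hpur]
  calc star (q * u * p * r) * (q * u * p * r)
      = star r * (star u * u) * r - star r * star u * p - p * u * r + p * p := by
        rw [hoff, star_sub, star_mul, hp.star_eq]; noncomm_ring
    _ = star r * r - p := by rw [hu, mul_one, hrup, hpur, hpp.eq]; abel

section HilbertBasis

variable {𝕜 E F : Type*} [RCLike 𝕜]
  [NormedAddCommGroup E] [InnerProductSpace 𝕜 E] [NormedAddCommGroup F] [InnerProductSpace 𝕜 F]

theorem HilbertBasis.hasSum_norm_inner_sq {ι : Type*} (b : HilbertBasis ι 𝕜 E) (x : E) :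
    HasSum (fun i => ‖⟪b i, x⟫_𝕜‖ ^ 2) (‖x‖ ^ 2) := by
  have h := lp.hasSum_norm (p := 2) (by norm_num) (b.repr x)
  simpa [HilbertBasis.repr_apply_apply] using h

variable [CompleteSpace E] [CompleteSpace F]

/-- Both sides are the sum of `|⟪c j, T (b i)⟫|²` over all pairs `(i, j)`. -/
theorem HilbertBasis.summable_norm_adjoint_apply_sq {ι κ : Type*} (b : HilbertBasis ι 𝕜 E)
    (c : HilbertBasis κ 𝕜 F) {T : E →L[𝕜] F} (hT : Summable fun i => ‖T (b i)‖ ^ 2) :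
    Summable fun j => ‖adjoint T (c j)‖ ^ 2 := by
  set f : ι × κ → ℝ := fun p => ‖⟪c p.2, T (b p.1)⟫_𝕜‖ ^ 2
  have hf : 0 ≤ f := fun p => sq_nonneg _
  have hrow (i : ι) : HasSum (fun j => f (i, j)) (‖T (b i)‖ ^ 2) :=
    c.hasSum_norm_inner_sq (T (b i))
  have hcol (j : κ) : HasSum (fun i => f (i, j)) (‖adjoint T (c j)‖ ^ 2) := by
    refine (b.hasSum_norm_inner_sq (adjoint T (c j))).congr_fun fun i => ?_
    simp only [f, adjoint_inner_right, norm_inner_symm]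
  have hsum : Summable f := (summable_prod_of_nonneg hf).mpr
    ⟨fun i => (hrow i).summable, hT.congr fun i => (hrow i).tsum_eq.symm⟩
  exact ((summable_prod_of_nonneg fun p => hf p.swap).mp hsum.prod_symm).2.congr
    fun j => (hcol j).tsum_eq

theorem HilbertBasis.summable_norm_comp_apply_sq {E' ι ι' : Type*} [NormedAddCommGroup E']
    [InnerProductSpace 𝕜 E'] [CompleteSpace E'] (b : HilbertBasis ι 𝕜 E)
    (b' : HilbertBasis ι' 𝕜 E') {B : E →L[𝕜] F} (hB : Summable fun i => ‖B (b i)‖ ^ 2)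
    (A : E' →L[𝕜] E) : Summable fun i => ‖(B ∘L A) (b' i)‖ ^ 2 := by
  obtain ⟨w, c, -⟩ := exists_hilbertBasis 𝕜 F
  have hB' := b.summable_norm_adjoint_apply_sq c hB
  have hBA' : Summable fun j => ‖adjoint (B ∘L A) (c j)‖ ^ 2 := by
    refine .of_nonneg_of_le (fun j => sq_nonneg _) (fun j => ?_) (hB'.mul_left (‖adjoint A‖ ^ 2))
    rw [adjoint_comp, comp_apply, ← mul_pow]
    exact pow_le_pow_left₀ (norm_nonneg _) ((adjoint A).le_opNorm _) 2
  simpa only [adjoint_adjoint] using c.summable_norm_adjoint_apply_sq b' hBA'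

end HilbertBasis

variable {H H' : Type*}
  [NormedAddCommGroup H] [InnerProductSpace ℂ H] [CompleteSpace H]
  [NormedAddCommGroup H'] [InnerProductSpace ℂ H'] [CompleteSpace H']

variable {G : Type*} [NormedAddCommGroup G] [InnerProductSpace ℂ G] [CompleteSpace G]

theorem IsHilbertSchmidt.comp {B : H →L[ℂ] G} (hB : IsHilbertSchmidt B) (A : H' →L[ℂ] H) :
    IsHilbertSchmidt (B ∘L A) := by
  obtain ⟨w, b, hb⟩ := hB
  obtain ⟨w', b', -⟩ := exists_hilbertBasis ℂ H'
  exact ⟨w', b', b.summable_norm_comp_apply_sq b' hb A⟩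

theorem opAbs_eq_self_of_nonneg {T : H →L[ℂ] H} (hT : 0 ≤ T) : opAbs T = T := by
  rw [opAbs, ← star_eq_adjoint, hT.isSelfAdjoint.star_eq, ← mul_def, ← sq]
  exact CFC.sqrt_sq T hT

theorem IsHilbertSchmidt.isTraceClass_adjoint_comp_self {S : H →L[ℂ] G}
    (hS : IsHilbertSchmidt S) : IsTraceClass (adjoint S ∘L S) := by
  obtain ⟨w, b, hb⟩ := hS
  have hpos : 0 ≤ adjoint S ∘L S := (nonneg_iff_isPositive _).mpr (isPositive_adjoint_comp_self S)
  refine ⟨w, b, hb.congr fun i => ?_⟩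
  rw [opAbs_eq_self_of_nonneg hpos, comp_apply, adjoint_inner_right, inner_self_eq_norm_sq]

theorem stmt12_general (U Pp Pm : H →L[ℂ] H)
    (hU1 : adjoint U ∘L U = 1)
    (hPmSa : IsSelfAdjoint Pm)
    (hPmIdem : IsIdempotentElem Pm)
    (hSum : Pp + Pm = 1)
    (hpm : IsHilbertSchmidt (Pp ∘L U ∘L Pm))
    (R : H →L[ℂ] H) (hRcorner : Pm ∘L R ∘L Pm = R)
    (hR2 : (Pm ∘L U ∘L Pm) ∘L R = Pm) :
    IsTraceClass (adjoint R ∘L R - Pm) := by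
  simp only [← star_eq_adjoint, ← mul_def] at hU1 hRcorner hR2 hpm ⊢
  have hR : Pm * R = R := by rw [← hRcorner, ← mul_assoc, hPmIdem.eq]
  have hinv : Pm * U * Pm * R = Pm := by simpa only [mul_assoc] using hR2
  rw [← star_mul_self_offDiag_mul_eq_star_mul_self_sub hU1 hPmSa hPmIdem hSum hR hinv]
  simpa only [star_eq_adjoint, mul_def, comp_assoc] using
    (hpm.comp R).isTraceClass_adjoint_comp_self

/-- `R` is the inverse of `U₋₋` relative to `ran P⁻`; the identity on `ran P⁻`,
extended by `0`, is `P⁻` itself, so `R*R ∈ id + I₁(ran P⁻)` reads `R*R - P⁻ ∈ I₁`. -/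
theorem stmt12 (U Pp Pm : H →L[ℂ] H)
    (hU1 : adjoint U ∘L U = 1) (hU2 : U ∘L adjoint U = 1)
    (hPpSa : IsSelfAdjoint Pp) (hPmSa : IsSelfAdjoint Pm)
    (hPpIdem : IsIdempotentElem Pp) (hPmIdem : IsIdempotentElem Pm)
    (hSum : Pp + Pm = 1)
    (hpm : IsHilbertSchmidt (Pp ∘L U ∘L Pm)) (hmp : IsHilbertSchmidt (Pm ∘L U ∘L Pp))
    (R : H →L[ℂ] H) (hRcorner : Pm ∘L R ∘L Pm = R)
    (hR1 : R ∘L (Pm ∘L U ∘L Pm) = Pm) (hR2 : (Pm ∘L U ∘L Pm) ∘L R = Pm) :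
    IsTraceClass (adjoint R ∘L R - Pm) :=
  stmt12_general U Pp Pm hU1 hPmSa hPmIdem hSum hpm R hRcorner hR2
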